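/- Let ℓ : V → ℝ be a linear functional and let w ∈ V be the unique element satisfying p(w, v) = ℓ(v) for all v ∈ V (Riesz representative of ℓ with respect to p). Define η := sup over v ∈ V, v ≠ 0, of ℓ(v)/√(a(v,v)), and η̃ := √(p(w,w)). Then γ·η ≤ η̃ ≤ Γ·η. (This shows that the preconditioned approximation η̃ of a dual-norm stabilization estimator is equivalent to the estimator up to the spectral equivalence constants.) -/

import Mathlib

/-!
By Cauchy–Schwarz for `p`, `ℓ v = p(w, v) ≤ η̃ ‖v‖_p ≤ (η̃ / γ) ‖v‖_a`, so `γ η ≤ η̃`.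
Testing the supremum with `v = w` gives `η̃² = ℓ w ≤ η ‖w‖_a ≤ Γ η η̃`, so `η̃ ≤ Γ η`.
-/

open Real

section DualNorm

variable {V : Type*} [AddCommGroup V] [Module ℝ V]

lemma apply_le_sqrt_mul_sqrt_of_symm (p : V →ₗ[ℝ] V →ₗ[ℝ] ℝ)
    (hp_symm : ∀ v w : V, p v w = p w v) (hp_nonneg : ∀ v : V, 0 ≤ p v v) (w v : V) :
    p w v ≤ √(p w w) * √(p v v) := by
  have hcs : p w v ^ 2 ≤ p w w * p v v :=
    LinearMap.BilinForm.apply_sq_le_of_symm p hp_nonneg ⟨fun x y ↦ hp_symm x y⟩ w v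
  rw [← sqrt_mul (hp_nonneg w)]
  exact (le_abs_self _).trans (abs_le_sqrt hcs)

noncomputable def dualNorm (a : V →ₗ[ℝ] V →ₗ[ℝ] ℝ) (ℓ : V →ₗ[ℝ] ℝ) : ℝ :=
  ⨆ v : {v : V // v ≠ 0}, ℓ v.1 / √(a v.1 v.1)

@[simp]
lemma dualNorm_zero (a : V →ₗ[ℝ] V →ₗ[ℝ] ℝ) : dualNorm a 0 = 0 := by
  simp [dualNorm]

variable {a : V →ₗ[ℝ] V →ₗ[ℝ] ℝ} {ℓ : V →ₗ[ℝ] ℝ} {C : ℝ}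

lemma div_sqrt_le_of_le_mul_sqrt (ha_pos : ∀ v : V, v ≠ 0 → 0 < a v v)
    (h : ∀ v, ℓ v ≤ C * √(a v v)) (v : {v : V // v ≠ 0}) : ℓ v.1 / √(a v.1 v.1) ≤ C :=
  (div_le_iff₀ (sqrt_pos.2 (ha_pos v.1 v.2))).2 (h v.1)

lemma dualNorm_le (ha_pos : ∀ v : V, v ≠ 0 → 0 < a v v) (hC : 0 ≤ C)
    (h : ∀ v, ℓ v ≤ C * √(a v v)) : dualNorm a ℓ ≤ C :=
  Real.iSup_le (div_sqrt_le_of_le_mul_sqrt ha_pos h) hC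

lemma apply_le_dualNorm_mul_sqrt (ha_pos : ∀ v : V, v ≠ 0 → 0 < a v v)
    (h : ∀ v, ℓ v ≤ C * √(a v v)) (v : V) : ℓ v ≤ dualNorm a ℓ * √(a v v) := by
  rcases eq_or_ne v 0 with rfl | hv
  · simp
  have hbdd : BddAbove (Set.range fun v : {v : V // v ≠ 0} ↦ ℓ v.1 / √(a v.1 v.1)) :=
    ⟨C, Set.forall_mem_range.2 (div_sqrt_le_of_le_mul_sqrt ha_pos h)⟩
  exact (div_le_iff₀ (sqrt_pos.2 (ha_pos v hv))).1 (le_ciSup hbdd ⟨v, hv⟩)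

end DualNorm

theorem preconditioned_dual_norm_equivalence_general
    {V : Type} [AddCommGroup V] [Module ℝ V]
    (a p : V →ₗ[ℝ] V →ₗ[ℝ] ℝ)
    (hp_symm : ∀ v w : V, p v w = p w v)
    (ha_pos : ∀ v : V, v ≠ 0 → 0 < a v v)
    (hp_pos : ∀ v : V, v ≠ 0 → 0 < p v v)
    (γ Γ : ℝ) (hγ : 0 < γ)
    (hspec : ∀ v : V, γ * Real.sqrt (p v v) ≤ Real.sqrt (a v v) ∧
      Real.sqrt (a v v) ≤ Γ * Real.sqrt (p v v))
    (ℓ : V →ₗ[ℝ] ℝ) (w : V) (hw : ∀ v : V, p w v = ℓ v)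
    (η ηtilde : ℝ)
    (hη : η = ⨆ v : {v : V // v ≠ 0}, ℓ v.1 / Real.sqrt (a v.1 v.1))
    (hηtilde : ηtilde = Real.sqrt (p w w)) :
    γ * η ≤ ηtilde ∧ ηtilde ≤ Γ * η := by
  change η = dualNorm a ℓ at hη
  subst hη hηtilde
  have hp_nonneg (v : V) : 0 ≤ p v v := by
    rcases eq_or_ne v 0 with rfl | hv
    · simp
    · exact (hp_pos v hv).le
  have hbound (v : V) : ℓ v ≤ √(p w w) / γ * √(a v v) := calc
    ℓ v = p w v := (hw v).symm
    _ ≤ √(p w w) * √(p v v) := apply_le_sqrt_mul_sqrt_of_symm p hp_symm hp_nonneg w v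
    _ ≤ √(p w w) * (√(a v v) / γ) := by gcongr; exact (le_div_iff₀' hγ).2 (hspec v).1
    _ = √(p w w) / γ * √(a v v) := by ring
  refine ⟨(le_div_iff₀' hγ).1 (dualNorm_le ha_pos (by positivity) hbound), ?_⟩
  rcases eq_or_ne w 0 with rfl | hw0
  · obtain rfl : ℓ = 0 := LinearMap.ext fun v ↦ by simp [← hw v]
    simp
  have hpw : 0 < √(p w w) := sqrt_pos.2 (hp_pos w hw0)
  have hℓw : ℓ w ≤ dualNorm a ℓ * √(a w w) := apply_le_dualNorm_mul_sqrt ha_pos hbound w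
  have hℓw_nonneg : 0 ≤ ℓ w := hw w ▸ hp_nonneg w
  have hη_nonneg : 0 ≤ dualNorm a ℓ :=
    nonneg_of_mul_nonneg_left (hℓw_nonneg.trans hℓw) (sqrt_pos.2 (ha_pos w hw0))
  refine le_of_mul_le_mul_right ?_ hpw
  calc √(p w w) * √(p w w) = ℓ w := by rw [mul_self_sqrt (hp_nonneg w), hw]
    _ ≤ dualNorm a ℓ * √(a w w) := hℓw
    _ ≤ dualNorm a ℓ * (Γ * √(p w w)) := by gcongr; exact (hspec w).2
    _ = Γ * dualNorm a ℓ * √(p w w) := by ring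

/-- Spectral equivalence of the preconditioned approximation of a dual-norm estimator:
if `γ √(p(v,v)) ≤ √(a(v,v)) ≤ Γ √(p(v,v))` for all `v`, `w` is the Riesz representative of
a linear functional `ℓ` with respect to `p`, `η` is the dual norm of `ℓ` with respect to
the `a`-norm and `η̃ = √(p(w,w))`, then `γ η ≤ η̃ ≤ Γ η`. -/
theorem preconditioned_dual_norm_equivalence
    {V : Type} [AddCommGroup V] [Module ℝ V] [FiniteDimensional ℝ V] [Nontrivial V]
    (a p : V →ₗ[ℝ] V →ₗ[ℝ] ℝ)
    (ha_symm : ∀ v w : V, a v w = a w v)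
    (hp_symm : ∀ v w : V, p v w = p w v)
    (ha_pos : ∀ v : V, v ≠ 0 → 0 < a v v)
    (hp_pos : ∀ v : V, v ≠ 0 → 0 < p v v)
    (γ Γ : ℝ) (hγ : 0 < γ) (hΓ : 0 < Γ)
    (hspec : ∀ v : V, γ * Real.sqrt (p v v) ≤ Real.sqrt (a v v) ∧
      Real.sqrt (a v v) ≤ Γ * Real.sqrt (p v v))
    (ℓ : V →ₗ[ℝ] ℝ) (w : V) (hw : ∀ v : V, p w v = ℓ v)
    (η ηtilde : ℝ)
    (hη : η = ⨆ v : {v : V // v ≠ 0}, ℓ v.1 / Real.sqrt (a v.1 v.1))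
    (hηtilde : ηtilde = Real.sqrt (p w w)) :
    γ * η ≤ ηtilde ∧ ηtilde ≤ Γ * η :=
  preconditioned_dual_norm_equivalence_general a p hp_symm ha_pos hp_pos γ Γ hγ hspec ℓ w hw η
    ηtilde hη hηtilde
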